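/- arXiv:2410.17563 — 3 statements merged into one kernel-verified Lean document; each statement's English description precedes it below -/
import Mathlib

section
/- (McNaughton's wraparound bound) Given n jobs with processing times C_1,...,C_n and m identical processors, there exists a preemptive schedule (no job executing on two processors simultaneously) with makespan equal to max(max_j C_j, (∑_j C_j)/m). -/
open MeasureTheory

private lemma key_len (S E a b : ℝ) (h1 : S ≤ E) (h2 : a ≤ b) :
    max (min E b - max S a) 0 = (min E b - min S b) - (min E a - min S a) := by
  simp only [max_def, min_def]
  split_ifs <;> linarith

/-- McNaughton's wraparound bound: `n` jobs with processing times `C j` can be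
preemptively scheduled on `m` identical processors, with no job executing on two
processors simultaneously, with makespan `max (max_j C j) ((∑ j, C j) / m)`. -/
theorem stmt4 (n m : ℕ) (hn : 0 < n) (hm : 0 < m) (C : Fin n → ℝ) (hC : ∀ j, 0 ≤ C j) :
    ∃ σ : Fin n → Fin m → Set ℝ,
      (∀ j p, MeasurableSet (σ j p)) ∧
      (∀ j p, σ j p ⊆ Set.Icc 0 (max (⨆ j, C j) ((∑ j, C j) / m))) ∧
      (∀ j, ∑ p, (volume (σ j p)).toReal = C j) ∧
      (∀ p, ∀ j j' : Fin n, j ≠ j' → Disjoint (σ j p) (σ j' p)) ∧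
      (∀ j, ∀ p p' : Fin m, p ≠ p' → Disjoint (σ j p) (σ j p')) := by
  classical
  set T : ℝ := max (⨆ j, C j) ((∑ j, C j) / m) with hTdef
  have hm' : (0:ℝ) < m := by exact_mod_cast hm
  have hsum0 : 0 ≤ ∑ j, C j := Finset.sum_nonneg fun j _ => hC j
  have hT0 : 0 ≤ T := le_trans (div_nonneg hsum0 hm'.le) (le_max_right _ _)
  have hCT : ∀ j, C j ≤ T := fun j =>
    le_trans (le_ciSup (Set.Finite.bddAbove (Set.finite_range C)) j) (le_max_left _ _)
  have hsum : (∑ j, C j) ≤ m * T := by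
    have h1 : (∑ j, C j) / m ≤ T := le_max_right _ _
    calc (∑ j, C j) = m * ((∑ j, C j) / m) := by field_simp
    _ ≤ m * T := by nlinarith
  set D : ℕ → ℝ := fun i => if h : i < n then C ⟨i, h⟩ else 0 with hDdef
  have hD0 : ∀ i, 0 ≤ D i := by
    intro i; simp only [hDdef]; split_ifs with h
    · exact hC _
    · exact le_refl 0
  set S : ℕ → ℝ := fun k => ∑ i ∈ Finset.range k, D i with hSdef
  have hSmono : Monotone S := by
    intro a b hab
    exact Finset.sum_le_sum_of_subset_of_nonneg (Finset.range_subset_range.2 hab)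
      (fun i _ _ => hD0 i)
  have hS0 : ∀ k, 0 ≤ S k := fun k => Finset.sum_nonneg fun i _ => hD0 i
  have hSn : S n = ∑ j, C j := by
    have h1 : S n = ∑ j : Fin n, D j.val := (Fin.sum_univ_eq_sum_range D n).symm
    rw [h1]
    exact Finset.sum_congr rfl fun j _ => by simp [hDdef, j.isLt]
  have hSucc : ∀ j : Fin n, S (j.val + 1) = S j.val + C j := by
    intro j
    simp [hSdef, Finset.sum_range_succ, hDdef, j.isLt]
  have hEle : ∀ j : Fin n, S (j.val + 1) ≤ m * T := fun j =>
    le_trans (le_trans (hSmono j.isLt) (le_of_eq hSn)) hsum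
  refine ⟨fun j p => Set.Ico (max (S j.val) (p.val * T) - p.val * T)
      (min (S (j.val + 1)) ((p.val + 1) * T) - p.val * T), ?_, ?_, ?_, ?_, ?_⟩
  · intro j p; exact measurableSet_Ico
  · intro j p t ht
    obtain ⟨h1, h2⟩ := ht
    constructor
    · have := le_max_right (S j.val) ((p.val:ℝ) * T)
      linarith
    · have := min_le_right (S (j.val + 1)) (((p.val:ℝ) + 1) * T)
      linarith
  · intro j
    set f : ℕ → ℝ := fun k => min (S (j.val+1)) ((k:ℝ)*T) - min (S j.val) ((k:ℝ)*T) with hf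
    have hstep : ∀ p : Fin m,
        ((volume (Set.Ico (max (S j.val) (p.val * T) - p.val * T)
          (min (S (j.val + 1)) ((p.val + 1) * T) - p.val * T))).toReal)
        = f (p.val + 1) - f p.val := by
      intro p
      rw [Real.volume_Ico, ENNReal.toReal_ofReal']
      have hSE : S j.val ≤ S (j.val + 1) := hSmono (Nat.le_succ _)
      have hab : (p.val:ℝ) * T ≤ ((p.val:ℝ) + 1) * T := by nlinarith
      have hk := key_len (S j.val) (S (j.val+1)) ((p.val:ℝ)*T) (((p.val:ℝ)+1)*T) hSE hab
      have e1 : min (S (j.val+1)) (((p.val:ℝ)+1)*T) - (p.val:ℝ)*T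
          - (max (S j.val) ((p.val:ℝ)*T) - (p.val:ℝ)*T)
          = min (S (j.val+1)) (((p.val:ℝ)+1)*T) - max (S j.val) ((p.val:ℝ)*T) := by ring
      rw [e1, hk]
      simp only [hf]
      push_cast
      ring
    calc ∑ p : Fin m, ((volume (Set.Ico (max (S j.val) (p.val * T) - p.val * T)
          (min (S (j.val + 1)) ((p.val + 1) * T) - p.val * T))).toReal)
        = ∑ p : Fin m, (f (p.val + 1) - f p.val) := Finset.sum_congr rfl fun p _ => hstep p
      _ = ∑ k ∈ Finset.range m, (f (k+1) - f k) :=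
          Fin.sum_univ_eq_sum_range (fun k => f (k+1) - f k) m
      _ = f m - f 0 := Finset.sum_range_sub f m
      _ = C j := by
          have hEm : S (j.val+1) ≤ m*T := hEle j
          have hSm : S j.val ≤ m*T := le_trans (hSmono (Nat.le_succ _)) hEm
          have h1 : f 0 = 0 := by
            simp [hf, min_eq_right (hS0 (j.val+1)), min_eq_right (hS0 j.val)]
          have h2 : f m = S (j.val+1) - S j.val := by
            simp [hf, min_eq_left hEm, min_eq_left hSm]
          rw [h1, h2, hSucc j]; ring
  · intro p j j' hne
    rcases hne.lt_or_gt with h | h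
    · have hle : S (j.val + 1) ≤ S j'.val := hSmono h
      rw [Set.disjoint_left]
      intro t ht ht'
      have h1 := ht.2
      have h2 := ht'.1
      have h3 := min_le_left (S (j.val + 1)) (((p.val:ℝ)+1) * T)
      have h4 := le_max_left (S j'.val) ((p.val:ℝ) * T)
      linarith
    · have hle : S (j'.val + 1) ≤ S j.val := hSmono h
      rw [Set.disjoint_left]
      intro t ht ht'
      have h1 := ht'.2
      have h2 := ht.1
      have h3 := min_le_left (S (j'.val + 1)) (((p.val:ℝ)+1) * T)
      have h4 := le_max_left (S j.val) ((p.val:ℝ) * T)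
      linarith
  · intro j p p' hne
    have key : ∀ p p' : Fin m, p.val < p'.val →
        Disjoint (Set.Ico (max (S j.val) (p.val * T) - p.val * T)
            (min (S (j.val + 1)) ((p.val + 1) * T) - p.val * T))
          (Set.Ico (max (S j.val) (p'.val * T) - p'.val * T)
            (min (S (j.val + 1)) ((p'.val + 1) * T) - p'.val * T)) := by
      intro p p' hlt
      rw [Set.disjoint_left]
      intro t ht ht'
      have h1 : S j.val - (p.val:ℝ) * T ≤ t := by
        have := le_max_left (S j.val) ((p.val:ℝ) * T); linarith [ht.1]
      have h2 : t < S (j.val + 1) - (p'.val:ℝ) * T := by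
        have := min_le_left (S (j.val + 1)) (((p'.val:ℝ)+1) * T); linarith [ht'.2]
      have hcast : (p.val:ℝ) + 1 ≤ (p'.val:ℝ) := by exact_mod_cast hlt
      have hmul : ((p'.val:ℝ) - (p.val:ℝ) - 1) * T ≥ 0 :=
        mul_nonneg (by linarith) hT0
      have hCj := hCT j
      have hE := hSucc j
      linarith
    rcases hne.lt_or_gt with h | h
    · exact key p p' h
    · exact (key p' p h).symm
end

section
/- (Sufficiency of Augusto-style test for a zero-laxity task, simplified) Let Γ be a set of implicit-deadline sporadic tasks with total utilization U = ∑_{τ_i ∈ Γ} U_i < 1, and let τ_s be a task with deadline equal to its WCET C_s and period T_s ≤ min_{τ_i∈Γ} T_i. If C_s/T_s ≤ (1 − U)/(1 + U/⌊min_i T_i / T_s⌋), then ∑_{τ_i ∈ Γ∪{τ_s}} dbf(τ_i, t) ≤ t for all t > 0, i.e., the system is EDF-schedulable on one processor. -/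
set_option maxHeartbeats 1600000 in
/-- Sufficiency of the Augusto-style test for a zero-laxity split task piece
`τ_s = (C_s, D_s = C_s, T_s)` added to a set `Γ` of implicit-deadline sporadic
tasks with total utilization `U < 1` and `T_s ≤ min_i T_i`: if
`C_s/T_s ≤ (1 - U) / (1 + U / ⌊min_i T_i / T_s⌋)` then the whole system satisfies
`∑ dbf(τ, t) ≤ t` for all `t > 0`, i.e. it is EDF-schedulable on one processor. -/
theorem stmt13 (n : ℕ) (hn : 0 < n) (C T : Fin n → ℝ)
    (hC : ∀ i, 0 ≤ C i) (hT : ∀ i, 0 < T i)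
    (Cs Ts : ℝ) (hCs : 0 ≤ Cs) (hTs : 0 < Ts)
    (hTmin : Ts ≤ Finset.univ.inf'
      (Finset.univ_nonempty_iff.mpr (Fin.pos_iff_nonempty.mp hn)) T)
    (hU : ∑ i, C i / T i < 1)
    (htest : Cs / Ts ≤ (1 - ∑ i, C i / T i) /
      (1 + (∑ i, C i / T i) /
        ((⌊(Finset.univ.inf'
            (Finset.univ_nonempty_iff.mpr (Fin.pos_iff_nonempty.mp hn)) T) / Ts⌋ : ℤ) : ℝ))) :
    ∀ t : ℝ, 0 < t →
      (if Cs ≤ t then ((⌊(t - Cs) / Ts⌋ + 1 : ℤ) : ℝ) * Cs else 0) +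
        ∑ i, ((⌊t / T i⌋ : ℤ) : ℝ) * C i ≤ t := by
  intro t ht
  set Tm := Finset.univ.inf'
      (Finset.univ_nonempty_iff.mpr (Fin.pos_iff_nonempty.mp hn)) T with hTm
  set U := ∑ i, C i / T i with hUdef
  have hU0 : 0 ≤ U := Finset.sum_nonneg fun i _ => div_nonneg (hC i) (hT i).le
  have hTmi : ∀ i, Tm ≤ T i := fun i => Finset.inf'_le _ (Finset.mem_univ i)
  set k : ℤ := ⌊Tm / Ts⌋ with hk
  have hk1 : (1:ℤ) ≤ k := by
    rw [hk]
    exact Int.le_floor.mpr (by push_cast; rw [le_div_iff₀ hTs]; linarith)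
  have hkR : (1:ℝ) ≤ (k:ℝ) := by exact_mod_cast hk1
  have hkTs : (k:ℝ) * Ts ≤ Tm := by
    have h := Int.floor_le (Tm / Ts)
    rw [← hk] at h
    calc (k:ℝ) * Ts ≤ (Tm/Ts) * Ts := by nlinarith
    _ = Tm := div_mul_cancel₀ _ (ne_of_gt hTs)
  have hden : 0 < 1 + U / (k:ℝ) := by positivity
  have htest' : Cs / Ts * (1 + U/(k:ℝ)) ≤ 1 - U := (le_div_iff₀ hden).mp htest
  have hus0 : 0 ≤ Cs / Ts := div_nonneg hCs hTs.le
  have hus1U : Cs / Ts ≤ 1 - U := by nlinarith [div_nonneg hU0 (by linarith : (0:ℝ) ≤ (k:ℝ))]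
  have hCsTs : Cs ≤ Ts := by
    have : Cs / Ts ≤ 1 := by linarith
    nlinarith [(div_le_one hTs).mp this]
  have htestk : Cs / Ts * ((k:ℝ) + U) ≤ (k:ℝ) * (1 - U) := by
    have hkne : (k:ℝ) ≠ 0 := by positivity
    have := mul_le_mul_of_nonneg_right htest' (by linarith : (0:ℝ) ≤ (k:ℝ))
    calc Cs / Ts * ((k:ℝ) + U) = Cs / Ts * (1 + U/(k:ℝ)) * (k:ℝ) := by
          field_simp
    _ ≤ (1 - U) * (k:ℝ) := this
    _ = (k:ℝ) * (1 - U) := by ring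
  have hS : ∑ i, ((⌊t / T i⌋ : ℤ) : ℝ) * C i ≤ t * U := by
    rw [hUdef, Finset.mul_sum]
    apply Finset.sum_le_sum
    intro i _
    calc ((⌊t / T i⌋ : ℤ) : ℝ) * C i ≤ (t / T i) * C i :=
          mul_le_mul_of_nonneg_right (Int.floor_le _) (hC i)
    _ = t * (C i / T i) := by ring
  clear_value Tm U k
  clear htest hUdef hTm hk hTmin
  split_ifs with hct
  · set m : ℤ := ⌊(t - Cs)/Ts⌋ with hm
    have hm0 : (0:ℝ) ≤ (m:ℝ) := by
      have : (0:ℤ) ≤ m := Int.floor_nonneg.mpr (div_nonneg (by linarith) hTs.le)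
      exact_mod_cast this
    have hmt : (m:ℝ) * Ts + Cs ≤ t := by
      have h := Int.floor_le ((t - Cs)/Ts)
      rw [← hm] at h
      have := (le_div_iff₀ hTs).mp h
      linarith
    clear_value m
    clear hm
    by_cases hlt : t < Tm
    · have hS0 : ∑ i, ((⌊t / T i⌋ : ℤ) : ℝ) * C i = 0 := by
        apply Finset.sum_eq_zero
        intro i _
        have : ⌊t / T i⌋ = 0 := Int.floor_eq_zero_iff.mpr
          ⟨div_nonneg ht.le (hT i).le, (div_lt_one (hT i)).mpr (lt_of_lt_of_le hlt (hTmi i))⟩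
        simp [this]
      rw [hS0]
      push_cast
      nlinarith
    · push_neg at hlt
      have hkt : (k:ℝ) * Ts ≤ t := le_trans hkTs hlt
      have key : ((m:ℝ) + 1) * Cs ≤ t * (1 - U) := by
        by_cases hmk : m + 1 ≤ k
        · have h1 : ((m:ℝ) + 1) ≤ (k:ℝ) := by exact_mod_cast hmk
          have h2 : Cs ≤ Ts * (1 - U) := by
            have hCsu : Cs = Cs / Ts * Ts := (div_mul_cancel₀ _ hTs.ne').symm
            nlinarith [mul_le_mul_of_nonneg_right hus1U hTs.le]
          have h1U : (0:ℝ) ≤ 1 - U := by linarith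
          calc ((m:ℝ) + 1) * Cs ≤ (k:ℝ) * Cs := mul_le_mul_of_nonneg_right h1 hCs
          _ ≤ (k:ℝ) * (Ts * (1 - U)) :=
              mul_le_mul_of_nonneg_left h2 (by linarith)
          _ = ((k:ℝ) * Ts) * (1 - U) := by ring
          _ ≤ t * (1 - U) := mul_le_mul_of_nonneg_right hkt h1U
        · push_neg at hmk
          have hmk' : (k:ℝ) ≤ (m:ℝ) := by exact_mod_cast Int.lt_add_one_iff.mp hmk
          have h3 : Cs / Ts * ((m:ℝ) + U) ≤ (m:ℝ) * (1 - U) := by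
            clear hS
            nlinarith [mul_nonneg (sub_nonneg.mpr hus1U) (sub_nonneg.mpr hmk')]
          have hCsu : Cs = Cs / Ts * Ts := (div_mul_cancel₀ _ hTs.ne').symm
          rw [hCsu]
          clear hS
          nlinarith [mul_le_mul_of_nonneg_right h3 hTs.le,
            mul_le_mul_of_nonneg_right hmt (by linarith : (0:ℝ) ≤ 1 - U)]
      have hexp : t * (1 - U) = t - t * U := by ring
      push_cast
      linarith
  · have : t * U ≤ t := by nlinarith
    linarith
end

section
/- If for a segment S of a DAG task the condition C_v ≤ (∑_{u∈S} C_u)/m holds for all v ∈ S, then McNaughton's wraparound algorithm on m processors produces a valid schedule of S of length exactly W/m, where W = ∑_{u∈S} C_u: each node is assigned total time C_v, no processor is double-booked, and no node runs on two processors simultaneously. -/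
open MeasureTheory Set Function

/-!
Lay the jobs out back to back on one global timeline `[0, W)`, job `j` occupying
`[s_j, s_j + C_j)`, and let processor `p` run the slice `[p L, (p + 1) L)` of that timeline,
shifted to `[0, L)`, where `L = W / m`. The slices partition `[0, m L) = [0, W)`, so every job
receives its full length, and distinct jobs never meet on one processor. A job running at local
time `t` on processors `p ≠ q` would contain the global times `t + p L` and `t + q L`, which are
at least `L` apart; this is impossible for a half-open interval of length `C_j ≤ L`.
-/

section BackToBack

variable {ι : Type*} [LinearOrder ι] [LocallyFiniteOrderBot ι] (C : ι → ℝ)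

def startTime (j : ι) : ℝ := ∑ i ∈ Finset.Iio j, C i

variable {C}

lemma startTime_nonneg (hC : ∀ i, 0 ≤ C i) (j : ι) : 0 ≤ startTime C j :=
  Finset.sum_nonneg fun i _ => hC i

lemma startTime_add_eq_sum_Iic (j : ι) : startTime C j + C j = ∑ i ∈ Finset.Iic j, C i :=
  Finset.sum_Iio_add_eq_sum_Iic j

lemma startTime_add_le_startTime (hC : ∀ i, 0 ≤ C i) {a b : ι} (hab : a < b) :
    startTime C a + C a ≤ startTime C b := by
  rw [startTime_add_eq_sum_Iic]
  exact Finset.sum_le_sum_of_subset_of_nonneg (fun i hi => Finset.mem_Iio.2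
    ((Finset.mem_Iic.1 hi).trans_lt hab)) fun i _ _ => hC i

lemma startTime_add_le_sum [Fintype ι] (hC : ∀ i, 0 ≤ C i) (j : ι) :
    startTime C j + C j ≤ ∑ i, C i := by
  rw [startTime_add_eq_sum_Iic]
  exact Finset.sum_le_sum_of_subset_of_nonneg (Finset.subset_univ _) fun i _ _ => hC i

lemma pairwise_disjoint_Ico_startTime (hC : ∀ i, 0 ≤ C i) :
    Pairwise (Disjoint on fun j => Ico (startTime C j) (startTime C j + C j)) := by
  refine (pairwise_disjoint_on _).2 fun a b hab => ?_
  exact Ico_disjoint_Ico_same.mono_right (Ico_subset_Ico_left (startTime_add_le_startTime hC hab))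

end BackToBack

lemma disjoint_preimage_add_Ico {a b s t : ℝ} (h : b - a ≤ |s - t|) :
    Disjoint ((· + s) ⁻¹' Ico a b) ((· + t) ⁻¹' Ico a b) := by
  refine Set.disjoint_left.2 fun x hs ht => ?_
  simp only [mem_preimage, mem_Ico] at hs ht
  have : |s - t| < b - a := abs_sub_lt_iff.2 ⟨by linarith, by linarith⟩
  linarith

section Wraparound

/-- The part of `I` that processor `p` runs under wraparound with period `L`, in local time. -/
def wrap (L : ℝ) (I : Set ℝ) (p : ℕ) : Set ℝ :=
  (· + p * L) ⁻¹' (I ∩ Ico (p * L) ((p + 1 : ℕ) * L))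

variable {L : ℝ}

lemma wrap_Ico (a b : ℝ) (p : ℕ) :
    wrap L (Ico a b) p = Ico (max a (p * L) - p * L) (min b ((p + 1 : ℕ) * L) - p * L) := by
  rw [wrap, Ico_inter_Ico, preimage_add_const_Ico]

lemma wrap_subset_Ico_zero (I : Set ℝ) (p : ℕ) : wrap L I p ⊆ Ico 0 L := by
  refine (preimage_mono inter_subset_right).trans_eq ?_
  rw [preimage_add_const_Ico, sub_self]
  push_cast
  ring_nf

lemma Disjoint.wrap {I J : Set ℝ} (h : Disjoint I J) (p : ℕ) :
    Disjoint (wrap L I p) (wrap L J p) :=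
  (h.mono inter_subset_left inter_subset_left).preimage _

lemma disjoint_wrap_Ico {a b : ℝ} (hab : b - a ≤ L) {p q : ℕ} (hpq : p ≠ q) :
    Disjoint (wrap L (Ico a b) p) (wrap L (Ico a b) q) := by
  refine (disjoint_preimage_add_Ico (hab.trans ?_)).mono
    (preimage_mono inter_subset_left) (preimage_mono inter_subset_left)
  have hdist : (1 : ℝ) ≤ |(p : ℝ) - q| := by
    have : (1 : ℤ) ≤ |(p : ℤ) - q| := Int.one_le_abs (by omega)
    exact_mod_cast this
  rw [← sub_mul, abs_mul]
  exact (le_abs_self L).trans (le_mul_of_one_le_left (abs_nonneg L) hdist)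

lemma sum_volume_real_wrap (hL : 0 ≤ L) {I : Set ℝ} (hI : MeasurableSet I) (m : ℕ)
    (hIm : I ⊆ Ico 0 (m * L)) :
    ∑ p ∈ Finset.range m, volume.real (wrap L I p) = volume.real I := by
  have hdisj : Pairwise (Disjoint on fun p : ℕ => Ico (p * L) ((p + 1 : ℕ) * L)) :=
    Monotone.pairwise_disjoint_on_Ico_succ fun p q hpq => by gcongr
  have hcover : I ⊆ ⋃ p ∈ Finset.range m, Ico (p * L) ((p + 1 : ℕ) * L) :=
    hIm.trans (by simpa only [Nat.cast_zero, zero_mul] using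
      Ico_subset_biUnion_Ico m fun p : ℕ => (p : ℝ) * L)
  calc ∑ p ∈ Finset.range m, volume.real (wrap L I p)
      = ∑ p ∈ Finset.range m, volume.real (I ∩ Ico (p * L) ((p + 1 : ℕ) * L)) := by
        simp only [wrap, measureReal_def, measure_preimage_add_right]
    _ = volume.real (⋃ p ∈ Finset.range m, I ∩ Ico (p * L) ((p + 1 : ℕ) * L)) :=
        (measureReal_biUnion_finset (fun p _ q _ hpq => (hdisj hpq).mono inter_subset_right
          inter_subset_right) (fun p _ => hI.inter measurableSet_Ico)
          fun p _ => ((measure_mono inter_subset_right).trans_lt measure_Ico_lt_top).ne).symm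
    _ = volume.real I := by rw [← inter_iUnion₂, inter_eq_left.2 hcover]

end Wraparound

/-- If each job of a segment satisfies `C j ≤ W / m` where `W = ∑ j, C j`, then
McNaughton's wraparound algorithm on `m` processors yields a valid schedule of length
exactly `W / m`: each job gets total time `C j`, each job occupies an interval on each
processor, no processor is double-booked, and no job runs on two processors
simultaneously. -/
theorem stmt14 (n m : ℕ) (hm : 0 < m) (C : Fin n → ℝ) (hC : ∀ j, 0 ≤ C j)
    (hsmall : ∀ j, C j ≤ (∑ i, C i) / m) :
    ∃ σ : Fin n → Fin m → Set ℝ,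
      (∀ j p, ∃ a b : ℝ, σ j p = Set.Ico a b) ∧
      (∀ j p, σ j p ⊆ Set.Ico 0 ((∑ i, C i) / m)) ∧
      (∀ j, ∑ p, (volume (σ j p)).toReal = C j) ∧
      (∀ p, ∀ j j' : Fin n, j ≠ j' → Disjoint (σ j p) (σ j' p)) ∧
      (∀ j, ∀ p p' : Fin m, p ≠ p' → Disjoint (σ j p) (σ j p')) := by
  set L := (∑ i, C i) / m
  have hL : 0 ≤ L := div_nonneg (Finset.sum_nonneg fun i _ => hC i) m.cast_nonneg
  have hmL : (m : ℝ) * L = ∑ i, C i := mul_div_cancel₀ _ (by positivity)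
  let job j := Ico (startTime C j) (startTime C j + C j)
  refine ⟨fun j p => wrap L (job j) p, fun j p => ⟨_, _, wrap_Ico _ _ _⟩,
    fun j p => wrap_subset_Ico_zero _ _, fun j => ?_,
    fun p j j' hj => (pairwise_disjoint_Ico_startTime hC hj).wrap _,
    fun j p p' hp => disjoint_wrap_Ico (by simpa using hsmall j) (Fin.val_ne_of_ne hp)⟩
  have hjob : job j ⊆ Ico 0 (m * L) := by
    rw [hmL]
    exact Ico_subset_Ico (startTime_nonneg hC j) (startTime_add_le_sum hC j)
  simp only [← measureReal_def]
  rw [Fin.sum_univ_eq_sum_range (fun p => volume.real (wrap L (job j) p)),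
    sum_volume_real_wrap hL measurableSet_Ico m hjob,
    Real.volume_real_Ico_of_le (le_add_of_nonneg_right (hC j)), add_sub_cancel_left]
end
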